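/- arXiv:1603.09017 — 2 statements merged into one kernel-verified Lean document; each statement's English description precedes it below -/
import Mathlib

section
/- For an irreducible transition matrix P on a finite state space S with tree weights Σ_j > 0 for all j, the probability vector π defined by π_j = Σ_j / (Σ_{k∈S} Σ_k) is a stationary distribution for P, i.e., π P = π. -/
open Finset

/-- A spanning forest of `S` with root set `R`, encoded as a successor function:
roots are fixed points, and every state eventually reaches `R` under iteration. -/
def IsForest {S : Type*} [Fintype S] [DecidableEq S] (R : Finset S) (f : S → S) : Prop :=
  (∀ i ∈ R, f i = i) ∧ ∀ i : S, ∃ n : ℕ, f^[n] i ∈ R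

/-- The `P`-weight of a forest: product of transition probabilities over its directed edges. -/
noncomputable def forestWt {S : Type*} [Fintype S] [DecidableEq S]
    (p : S → S → ℝ) (R : Finset S) (f : S → S) : ℝ :=
  ∏ i ∈ Rᶜ, p i (f i)

open Classical in
/-- `w p R`: the total `P`-weight of spanning forests with root set `R`. -/
noncomputable def w {S : Type*} [Fintype S] [DecidableEq S]
    (p : S → S → ℝ) (R : Finset S) : ℝ :=
  ∑ f : S → S, if IsForest R f then forestWt p R f else 0

open Classical in
/-- `wroot p A i j`: total weight of forests with root set `A` in which the tree
containing `i` has root `j`. -/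
noncomputable def wroot {S : Type*} [Fintype S] [DecidableEq S]
    (p : S → S → ℝ) (A : Finset S) (i j : S) : ℝ :=
  ∑ f : S → S, if IsForest A f ∧ ∃ n : ℕ, f^[n] i = j then forestWt p A f else 0

/-- `p` is a stochastic matrix. -/
def IsStochastic {S : Type*} [Fintype S] (p : S → S → ℝ) : Prop :=
  (∀ i j, 0 ≤ p i j) ∧ ∀ i, ∑ j, p i j = 1

/-- `p` is irreducible. -/
def PIrreducible {S : Type*} [Fintype S] [DecidableEq S] (p : S → S → ℝ) : Prop :=
  ∀ i j : S, ∃ n : ℕ, 0 < ((Matrix.of p) ^ n) i j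

/-- Weight of a path starting at `i` with successive states given by the list. -/
def wt {S : Type*} (p : S → S → ℝ) : S → List S → ℝ
  | _, [] => 1
  | i, j :: l => p i j * wt p j l


/-! Both sides of the balance equation `∑ i, Σ_i p i j = Σ_j` are the total weight
`∏ s, p s (g s)` of the maps `g : S → S` all of whose orbits pass through `j`: cycles through `j`
with trees hanging off them. Such a `g` is a tree rooted at `j` plus an edge `j → k`, and the
factor `∑ k, p j k = 1` disappears; it is also a tree rooted at `i` plus the edge `i → j`, where
`i` is recovered as the predecessor of `j` on the cycle. -/

section

open Function

variable {S : Type*}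

def AllReach (g : S → S) (j : S) : Prop :=
  ∀ s, ∃ n, g^[n] s = j

def graphWt [Fintype S] (p : S → S → ℝ) (g : S → S) : ℝ :=
  ∏ s, p s (g s)

lemma exists_iterate_update_eq [DecidableEq S] {f : S → S} {a s : S} (b : S) {n : ℕ}
    (h : f^[n] s = a) : ∃ m, (update f a b)^[m] s = a := by
  induction n generalizing s with
  | zero => exact ⟨0, h⟩
  | succ n ih =>
    by_cases hs : s = a
    · exact ⟨0, hs⟩
    · obtain ⟨m, hm⟩ := ih (by rwa [iterate_succ_apply] at h)
      exact ⟨m + 1, by rw [iterate_succ_apply, update_of_ne hs, hm]⟩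

lemma AllReach.update [DecidableEq S] {f : S → S} {a : S} (hf : AllReach f a) (b : S) :
    AllReach (update f a b) a :=
  fun s ↦ (hf s).elim fun _ hn ↦ exists_iterate_update_eq b hn

lemma isForest_singleton_iff [Fintype S] [DecidableEq S] {f : S → S} {i : S} :
    IsForest {i} f ↔ f i = i ∧ AllReach f i := by
  simp [IsForest, AllReach]

lemma cycle_pred_unique {g : S → S} {j i₁ i₂ : S}
    (h₁ : g i₁ = j) (e₁ : ∃ n, g^[n] j = i₁) (h₂ : g i₂ = j) (e₂ : ∃ n, g^[n] j = i₂) :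
    i₁ = i₂ := by
  obtain ⟨n₁, rfl⟩ := e₁
  obtain ⟨n₂, rfl⟩ := e₂
  have c₁ : g^[n₁ + 1] j = j := by rwa [iterate_succ_apply']
  have c₂ : g^[n₂ + 1] j = j := by rwa [iterate_succ_apply']
  calc g^[n₁] j = g^[n₁] (g^[n₂ + 1] j) := by rw [c₂]
    _ = g^[n₂] (g^[n₁ + 1] j) := by
      rw [← iterate_add_apply, ← iterate_add_apply, Nat.add_left_comm]
    _ = g^[n₂] j := by rw [c₁]

lemma AllReach.exists_cycle_pred {g : S → S} {j : S} (hg : AllReach g j) :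
    ∃ i, g i = j ∧ ∃ n, g^[n] j = i := by
  obtain ⟨m, hm⟩ := hg (g j)
  exact ⟨g^[m] j, by rwa [← iterate_succ_apply' g m j, iterate_succ_apply], m, rfl⟩

lemma AllReach.of_iterate_eq {g : S → S} {i j : S} (hg : AllReach g j)
    (hji : ∃ n, g^[n] j = i) : AllReach g i := by
  obtain ⟨m, hm⟩ := hji
  intro s
  obtain ⟨n, hn⟩ := hg s
  exact ⟨m + n, by rw [iterate_add_apply, hn, hm]⟩

lemma update_update_self_of_apply_eq [DecidableEq S] {f : S → S} {i : S} (hf : f i = i)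
    (k : S) : update (update f i k) i i = f := by
  rw [update_idem, update_eq_self_iff, hf]

lemma graphWt_update [Fintype S] [DecidableEq S] (p : S → S → ℝ) (f : S → S) (i k : S) :
    graphWt p (update f i k) = p i k * forestWt p {i} f := by
  rw [graphWt, Fintype.prod_eq_mul_prod_compl i, update_self, forestWt]
  congr 1
  refine prod_congr rfl fun x hx ↦ ?_
  rw [update_of_ne (by simpa using hx)]

open Classical in
lemma w_singleton_eq_sum_filter [Fintype S] [DecidableEq S] (p : S → S → ℝ) (i : S) :
    w p {i} = ∑ f ∈ univ.filter (IsForest {i}), forestWt p {i} f := by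
  rw [w, sum_filter]

open Classical in
lemma w_singleton_eq_sum_allReach [Fintype S] [DecidableEq S] (p : S → S → ℝ) (j : S)
    (hrow : ∑ k, p j k = 1) :
    w p {j} = ∑ g ∈ univ.filter (AllReach · j), graphWt p g := by
  calc w p {j} = ∑ f ∈ univ.filter (IsForest {j}), ∑ k, p j k * forestWt p {j} f := by
        simp_rw [w_singleton_eq_sum_filter, ← sum_mul, hrow, one_mul]
    _ = ∑ x ∈ univ.filter (IsForest {j}) ×ˢ univ, p j x.2 * forestWt p {j} x.1 := by
        rw [sum_product]
    _ = ∑ g ∈ univ.filter (AllReach · j), graphWt p g := by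
      refine sum_bij (fun x _ ↦ update x.1 j x.2) ?_ ?_ ?_ ?_
      · rintro ⟨f, k⟩ hx
        simp only [mem_product, mem_filter, mem_univ, true_and, and_true,
          isForest_singleton_iff] at hx ⊢
        exact hx.2.update k
      · rintro ⟨f₁, k₁⟩ hx₁ ⟨f₂, k₂⟩ hx₂ he
        simp only [mem_product, mem_filter, mem_univ, true_and, and_true,
          isForest_singleton_iff] at hx₁ hx₂ he
        have hk : k₁ = k₂ := by simpa using congrFun he j
        rw [← update_update_self_of_apply_eq hx₁.1 k₁, ← update_update_self_of_apply_eq hx₂.1 k₂,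
          he]
        simp [hk]
      · intro g hg
        simp only [mem_filter, mem_univ, true_and] at hg
        refine ⟨⟨update g j j, g j⟩, ?_, by simp⟩
        simpa [isForest_singleton_iff] using hg.update j
      · rintro ⟨f, k⟩ -
        exact (graphWt_update p f j k).symm

open Classical in
lemma sum_w_singleton_mul_eq_sum_allReach [Fintype S] [DecidableEq S] (p : S → S → ℝ) (j : S) :
    ∑ i, w p {i} * p i j = ∑ g ∈ univ.filter (AllReach · j), graphWt p g := by
  calc ∑ i, w p {i} * p i j = ∑ i, ∑ f ∈ univ.filter (IsForest {i}), p i j * forestWt p {i} f := by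
        simp_rw [w_singleton_eq_sum_filter, sum_mul, mul_comm]
    _ = ∑ x ∈ univ.filter (fun x : S × (S → S) ↦ IsForest {x.1} x.2),
          p x.1 j * forestWt p {x.1} x.2 :=
        (sum_finset_product' _ univ (fun i ↦ univ.filter (IsForest {i})) (by simp)).symm
    _ = ∑ g ∈ univ.filter (AllReach · j), graphWt p g := by
      refine sum_bij (fun x _ ↦ update x.2 x.1 j) ?_ ?_ ?_ ?_
      · rintro ⟨i, f⟩ hx
        simp only [mem_filter, mem_univ, true_and, isForest_singleton_iff] at hx ⊢
        intro s
        obtain ⟨m, hm⟩ := hx.2.update j s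
        exact ⟨m + 1, by rw [iterate_succ_apply', hm, update_self]⟩
      · rintro ⟨i₁, f₁⟩ hx₁ ⟨i₂, f₂⟩ hx₂ (he : update f₁ i₁ j = update f₂ i₂ j)
        simp only [mem_filter, mem_univ, true_and, isForest_singleton_iff] at hx₁ hx₂
        have hi : i₁ = i₂ := by
          refine cycle_pred_unique (update_self i₁ j f₁) (hx₁.2.update j j) ?_ ?_
          · rw [he, update_self]
          · rw [he]; exact hx₂.2.update j j
        subst hi
        rw [← update_update_self_of_apply_eq hx₁.1 j, ← update_update_self_of_apply_eq hx₂.1 j, he]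
      · intro g hg
        simp only [mem_filter, mem_univ, true_and] at hg
        obtain ⟨i, hgi, hji⟩ := hg.exists_cycle_pred
        refine ⟨(i, update g i i), ?_, ?_⟩
        · simpa [isForest_singleton_iff] using (hg.of_iterate_eq hji).update i
        · simp [hgi]
      · rintro ⟨i, f⟩ -
        exact (graphWt_update p f i j).symm

lemma sum_w_singleton_mul_eq_w_singleton [Fintype S] [DecidableEq S] (p : S → S → ℝ) (j : S)
    (hrow : ∑ k, p j k = 1) :
    ∑ i, w p {i} * p i j = w p {j} := by
  rw [sum_w_singleton_mul_eq_sum_allReach, w_singleton_eq_sum_allReach p j hrow]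

end

theorem tree_stationary_general {S : Type*} [Fintype S] [DecidableEq S]
    (p : S → S → ℝ) (hs : IsStochastic p)
    (π : S → ℝ) (hπ : ∀ j : S, π j = w p {j} / ∑ k : S, w p {k}) :
    ∀ j : S, ∑ i : S, π i * p i j = π j := by
  intro j
  simp_rw [hπ, div_mul_eq_mul_div, ← sum_div, sum_w_singleton_mul_eq_w_singleton p j (hs.2 j)]

/-- Markov chain tree theorem: `π_j = Σ_j / Σ^{(1)}` is a stationary distribution. -/
theorem tree_stationary {S : Type*} [Fintype S] [DecidableEq S]
    (p : S → S → ℝ) (hs : IsStochastic p) (hirr : PIrreducible p)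
    (hsig : ∀ j : S, 0 < w p {j})
    (π : S → ℝ) (hπ : ∀ j : S, π j = w p {j} / ∑ k : S, w p {k}) :
    ∀ j : S, ∑ i : S, π i * p i j = π j :=
  tree_stationary_general p hs π hπ
end

section
/- Let P be a stochastic matrix on finite S, R ⊆ S with w(R) > 0, and X a Markov chain with transition matrix P. Then for i ∈ S and j ∈ R, the hitting probability satisfies P_i(X_{T_R} = j) = w_{ij}(R)/w(R), where T_R is the first entry time to R (harmonic tree formula). -/
open Finset

open Classical in
/-- `hitProb p R i j`: probability that the chain started at `i` first enters `R` at `j`,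
expressed as a sum of path weights over all paths staying outside `R` until hitting `j`. -/
noncomputable def hitProb {S : Type*} [Fintype S] [DecidableEq S]
    (p : S → S → ℝ) (R : Finset S) (i j : S) : ℝ :=
  if i ∈ R then (if i = j then 1 else 0)
  else ∑' l : {l : List S // l.getLast? = some j ∧ ∀ x ∈ l.dropLast, x ∉ R}, wt p i l.1

/-!
Both sides, as functions of the starting state, are harmonic off `R` (`h x = ∑ k, p x k * h k`
for `x ∉ R`) and equal `δ_{xj}` on `R`. For the hitting probability this is first-step
analysis. For `x ↦ w_{xj}(R)`, pair a forest `f` with an extra edge `i → k`: if the path of `k`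
in `f` avoids `i`, exchange the roles of the extra edge and the edge `i → f i` of `f`. This
weight-preserving involution matches the pairs in which the tree of `k` has root `j` with those
in which the tree of `i` has. Finally, a forest of positive weight, which exists as `w(R) > 0`,
gives every state a path of positive probability into `R`, so by the maximum principle a
harmonic function vanishing on `R` vanishes everywhere.
-/

open Finset Filter Topology

def IsHarmonicOff {S : Type*} [Fintype S] (p : S → S → ℝ) (R : Finset S) (h : S → ℝ) :
    Prop :=
  ∀ x ∉ R, h x = ∑ k, p x k * h k

namespace IsHarmonicOff

variable {S : Type*} [Fintype S] {p : S → S → ℝ} {R : Finset S} {h h₁ h₂ : S → ℝ}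

theorem sub (hh₁ : IsHarmonicOff p R h₁) (hh₂ : IsHarmonicOff p R h₂) :
    IsHarmonicOff p R (h₁ - h₂) := fun x hx => by
  simp only [Pi.sub_apply, mul_sub, sum_sub_distrib]
  rw [← hh₁ x hx, ← hh₂ x hx]

theorem div_const (hh : IsHarmonicOff p R h) (c : ℝ) : IsHarmonicOff p R (fun x => h x / c) :=
  fun x hx => by simp only [mul_div_assoc', ← sum_div, ← hh x hx]

theorem apply_eq_of_forall_le (hh : IsHarmonicOff p R h) (hs : IsStochastic p) {x k : S}
    (hx : x ∉ R) (hmax : ∀ y, h y ≤ h x) (hk : 0 < p x k) : h k = h x := by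
  have hsum : ∑ y, p x y * (h x - h y) = 0 := by
    simp only [mul_sub, sum_sub_distrib, ← sum_mul, hs.2 x, one_mul]
    rw [← hh x hx, sub_self]
  have hterm := (sum_eq_zero_iff_of_nonneg fun y _ =>
    mul_nonneg (hs.1 x y) (sub_nonneg.2 (hmax y))).1 hsum k (mem_univ k)
  linarith [(mul_eq_zero.1 hterm).resolve_left hk.ne']

variable [DecidableEq S]

/-- Maximum principle: a maximum of `h` off `R` propagates along positive edges into `R`. -/
theorem le_zero (hh : IsHarmonicOff p R h) (hs : IsStochastic p) {f : S → S}
    (hf : IsForest R f) (hpos : ∀ x ∉ R, 0 < p x (f x)) (hR : ∀ x ∈ R, h x ≤ 0) (x : S) :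
    h x ≤ 0 := by
  by_contra! hx
  have : Nonempty S := ⟨x⟩
  obtain ⟨x₀, hx₀⟩ := Finite.exists_max h
  have hpos₀ : 0 < h x₀ := hx.trans_le (hx₀ x)
  have hiter : ∀ n, h (f^[n] x₀) = h x₀ := by
    intro n
    induction n with
    | zero => rfl
    | succ n ih =>
      have hn : f^[n] x₀ ∉ R := fun hmem => (hR _ hmem).not_gt (ih ▸ hpos₀)
      rw [Function.iterate_succ_apply',
        hh.apply_eq_of_forall_le hs hn (fun y => ih ▸ hx₀ y) (hpos _ hn), ih]
  obtain ⟨n, hn⟩ := hf.2 x₀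
  exact (hR _ hn).not_gt (hiter n ▸ hpos₀)

theorem eq_of_eqOn (hh₁ : IsHarmonicOff p R h₁) (hh₂ : IsHarmonicOff p R h₂)
    (hs : IsStochastic p) {f : S → S} (hf : IsForest R f) (hpos : ∀ x ∉ R, 0 < p x (f x))
    (hR : ∀ x ∈ R, h₁ x = h₂ x) : h₁ = h₂ := by
  funext x
  refine le_antisymm ?_ ?_ <;> rw [← sub_nonpos]
  · exact (hh₁.sub hh₂).le_zero hs hf hpos (fun y hy => by simp [hR y hy]) x
  · exact (hh₂.sub hh₁).le_zero hs hf hpos (fun y hy => by simp [hR y hy]) x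

end IsHarmonicOff

theorem iterate_update_eq_of_forall_ne {α : Type*} [DecidableEq α] {f : α → α} {i k x : α}
    {n : ℕ} (h : ∀ t < n, f^[t] x ≠ i) : (Function.update f i k)^[n] x = f^[n] x := by
  induction n with
  | zero => rfl
  | succ n ih =>
    rw [Function.iterate_succ_apply', Function.iterate_succ_apply', ih fun t ht => h t (by omega),
      Function.update_of_ne (h n n.lt_succ_self)]

section Reroot

variable {α : Type*} [DecidableEq α]

noncomputable def reroot (i : α) (a : α × (α → α)) : α × (α → α) :=
  open Classical in
  if ∃ n, a.2^[n] a.1 = i then a else (a.2 i, Function.update a.2 i a.1)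

theorem reroot_of_exists {f : α → α} {i k : α} (h : ∃ n, f^[n] k = i) :
    reroot i (k, f) = (k, f) := if_pos h

theorem reroot_of_not_exists {f : α → α} {i k : α} (h : ¬∃ n, f^[n] k = i) :
    reroot i (k, f) = (f i, Function.update f i k) := if_neg h

end Reroot

section Forest

variable {S : Type*} [Fintype S] [DecidableEq S] {R : Finset S} {f : S → S} {i j k : S}

theorem exists_isForest_pos_of_w_pos {p : S → S → ℝ} (hp : ∀ i j, 0 ≤ p i j)
    (hw : 0 < w p R) :
    ∃ f, IsForest R f ∧ ∀ x ∉ R, 0 < p x (f x) := by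
  classical
  obtain ⟨f, -, hf⟩ := exists_lt_of_sum_lt (f := fun _ => (0 : ℝ)) (by simpa [w] using hw)
  have hforest : IsForest R f := by
    by_contra h
    simp [h] at hf
  simp only [hforest, if_true, forestWt] at hf
  refine ⟨f, hforest, fun x hx => (hp x (f x)).lt_of_ne fun h0 => hf.ne' ?_⟩
  exact prod_eq_zero (mem_compl.2 hx) h0.symm

theorem IsForest.iterate_eq_of_le (hf : IsForest R f) {x : S} {n m : ℕ} (hn : f^[n] x ∈ R)
    (hnm : n ≤ m) : f^[m] x = f^[n] x := by
  obtain ⟨d, rfl⟩ := Nat.exists_eq_add_of_le hnm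
  rw [Nat.add_comm, Function.iterate_add_apply, Function.iterate_fixed (hf.1 _ hn)]

theorem IsForest.iterate_ne_self (hf : IsForest R f) (hi : i ∉ R) {n : ℕ} (hn : n ≠ 0) :
    f^[n] i ≠ i := by
  intro hcycle
  obtain ⟨m, hm⟩ := hf.2 i
  have hperiodic : f^[n * m] i = i := by
    rw [Function.iterate_mul]
    exact Function.iterate_fixed hcycle m
  rw [← hf.iterate_eq_of_le hm (Nat.le_mul_of_pos_left m (Nat.pos_of_ne_zero hn)),
    hperiodic] at hm
  exact hi hm

theorem IsForest.iterate_apply_ne (hf : IsForest R f) (hi : i ∉ R) (t : ℕ) :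
    f^[t] (f i) ≠ i := by
  rw [← Function.iterate_succ_apply]
  exact hf.iterate_ne_self hi t.succ_ne_zero

theorem IsForest.update (hf : IsForest R f) (hi : i ∉ R) (hk : ∀ n, f^[n] k ≠ i) :
    IsForest R (Function.update f i k) := by
  refine ⟨fun x hx => ?_, fun x => ?_⟩
  · rw [Function.update_of_ne (ne_of_mem_of_not_mem hx hi)]
    exact hf.1 x hx
  have reach_of_avoid :
      ∀ y, (∀ t, f^[t] y ≠ i) → ∃ n, (Function.update f i k)^[n] y ∈ R := by
    intro y hy
    obtain ⟨n, hn⟩ := hf.2 y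
    exact ⟨n, by rwa [iterate_update_eq_of_forall_ne fun t _ => hy t]⟩
  by_cases hx : ∃ t, f^[t] x = i
  · obtain ⟨m, hm⟩ := reach_of_avoid k hk
    refine ⟨Nat.find hx + (m + 1), ?_⟩
    rwa [Nat.add_comm, Function.iterate_add_apply,
      iterate_update_eq_of_forall_ne fun t ht => Nat.find_min hx ht, Nat.find_spec hx,
      Function.iterate_succ_apply, Function.update_self]
  · push Not at hx
    exact reach_of_avoid x hx

theorem forestWt_update_mul (p : S → S → ℝ) (hi : i ∉ R) :
    p i (f i) * forestWt p R (Function.update f i k) = p i k * forestWt p R f := by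
  have hiR : i ∈ Rᶜ := mem_compl.2 hi
  rw [forestWt, forestWt, ← mul_prod_erase _ _ hiR, ← mul_prod_erase _ (fun x => p x (f x)) hiR,
    Function.update_self, mul_left_comm]
  congr 2
  exact prod_congr rfl fun x hx => by rw [Function.update_of_ne (ne_of_mem_erase hx)]

def IsRootedAt (R : Finset S) (f : S → S) (x j : S) : Prop :=
  IsForest R f ∧ ∃ n, f^[n] x = j

theorem reroot_reroot (hf : IsForest R f) (hi : i ∉ R) :
    reroot i (reroot i (k, f)) = (k, f) := by
  by_cases h : ∃ n, f^[n] k = i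
  · rw [reroot_of_exists h, reroot_of_exists h]
  have h' : ¬∃ n, (Function.update f i k)^[n] (f i) = i := fun ⟨t, ht⟩ =>
    hf.iterate_apply_ne hi t
      (by rwa [iterate_update_eq_of_forall_ne fun s _ => hf.iterate_apply_ne hi s] at ht)
  rw [reroot_of_not_exists h, reroot_of_not_exists h', Function.update_self,
    Function.update_idem, Function.update_eq_self]

theorem mul_forestWt_reroot (p : S → S → ℝ) (hi : i ∉ R) :
    p i (reroot i (k, f)).1 * forestWt p R (reroot i (k, f)).2 = p i k * forestWt p R f := by
  by_cases h : ∃ n, f^[n] k = i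
  · rw [reroot_of_exists h]
  · rw [reroot_of_not_exists h]
    exact forestWt_update_mul p hi

theorem IsRootedAt.reroot_start (hj : j ∈ R) (hi : i ∉ R) (h : IsRootedAt R f k j) :
    IsRootedAt R (reroot i (k, f)).2 i j := by
  obtain ⟨hf, N, hN⟩ := h
  by_cases hk : ∃ n, f^[n] k = i
  · rw [reroot_of_exists hk]
    obtain ⟨n, hn⟩ := hk
    have hnN : n ≤ N := le_of_not_gt fun hlt =>
      ne_of_mem_of_not_mem hj hi (by rw [← hN, ← hn, hf.iterate_eq_of_le (hN ▸ hj) hlt.le])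
    refine ⟨hf, N - n, ?_⟩
    rw [← hn, ← Function.iterate_add_apply, Nat.sub_add_cancel hnN, hN]
  · rw [reroot_of_not_exists hk]
    refine ⟨hf.update hi (not_exists.1 hk), N + 1, ?_⟩
    dsimp only
    rw [Function.iterate_succ_apply, Function.update_self,
      iterate_update_eq_of_forall_ne fun t _ => not_exists.1 hk t, hN]

theorem IsRootedAt.reroot_fst (hj : j ∈ R) (hi : i ∉ R) (h : IsRootedAt R f i j) :
    IsRootedAt R (reroot i (k, f)).2 (reroot i (k, f)).1 j := by
  obtain ⟨hf, N, hN⟩ := h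
  by_cases hk : ∃ n, f^[n] k = i
  · rw [reroot_of_exists hk]
    obtain ⟨n, hn⟩ := hk
    exact ⟨hf, N + n, by rw [Function.iterate_add_apply, hn, hN]⟩
  · rw [reroot_of_not_exists hk]
    refine ⟨hf.update hi (not_exists.1 hk), ?_⟩
    cases N with
    | zero => exact absurd hN (ne_of_mem_of_not_mem hj hi).symm
    | succ N =>
      refine ⟨N, ?_⟩
      dsimp only
      rw [iterate_update_eq_of_forall_ne fun t _ => hf.iterate_apply_ne hi t,
        ← Function.iterate_succ_apply, hN]

variable (p : S → S → ℝ)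

open Classical in
theorem sum_mul_wroot_comp (g : S → S) :
    ∑ k, p i k * wroot p R (g k) j =
      ∑ a ∈ univ.filter fun a : S × (S → S) => IsRootedAt R a.2 (g a.1) j,
        p i a.1 * forestWt p R a.2 := by
  rw [sum_filter, Fintype.sum_prod_type]
  refine sum_congr rfl fun k _ => ?_
  rw [wroot, mul_sum]
  exact sum_congr rfl fun f _ => by rw [mul_ite, mul_zero]; exact if_congr Iff.rfl rfl rfl

theorem sum_mul_wroot (hj : j ∈ R) (hi : i ∉ R) :
    ∑ k, p i k * wroot p R k j = (∑ k, p i k) * wroot p R i j := by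
  classical
  rw [sum_mul]
  refine (sum_mul_wroot_comp p id).trans (Eq.trans ?_ (sum_mul_wroot_comp p fun _ => i).symm)
  refine sum_nbij' (reroot i) (reroot i) ?_ ?_ ?_ ?_ ?_
  · rintro ⟨k, f⟩ h
    exact mem_filter.2 ⟨mem_univ _, (mem_filter.1 h).2.reroot_start hj hi⟩
  · rintro ⟨k, f⟩ h
    exact mem_filter.2 ⟨mem_univ _, (mem_filter.1 h).2.reroot_fst hj hi⟩
  · rintro ⟨k, f⟩ h
    exact reroot_reroot (mem_filter.1 h).2.1 hi
  · rintro ⟨k, f⟩ h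
    exact reroot_reroot (mem_filter.1 h).2.1 hi
  · rintro ⟨k, f⟩ -
    exact (mul_forestWt_reroot p hi).symm

theorem wroot_of_mem (hi : i ∈ R) : wroot p R i j = if i = j then w p R else 0 := by
  classical
  rw [wroot, w]
  split_ifs with hij
  · subst hij
    exact sum_congr rfl fun f _ => if_congr ⟨And.left, fun hf => ⟨hf, 0, rfl⟩⟩ rfl rfl
  · refine sum_eq_zero fun f _ => if_neg ?_
    rintro ⟨hf, n, hn⟩
    exact hij (by rwa [Function.iterate_fixed (hf.1 i hi)] at hn)

theorem isHarmonicOff_wroot (hs : IsStochastic p) (hj : j ∈ R) :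
    IsHarmonicOff p R fun x => wroot p R x j := fun x hx => by
  rw [sum_mul_wroot p hj hx, hs.2 x, one_mul]

end Forest

section Paths

variable {S : Type*} {R : Finset S} {i j : S}

def IsHitPath (R : Finset S) (j : S) (l : List S) : Prop :=
  l.getLast? = some j ∧ ∀ x ∈ l.dropLast, x ∉ R

theorem not_isHitPath_nil : ¬IsHitPath R j [] := by
  simp [IsHitPath]

theorem isHitPath_singleton {k : S} : IsHitPath R j [k] ↔ k = j := by
  simp [IsHitPath]

theorem isHitPath_cons_cons {k m : S} {l : List S} :
    IsHitPath R j (k :: m :: l) ↔ k ∉ R ∧ IsHitPath R j (m :: l) := by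
  simp only [IsHitPath, List.getLast?_cons_cons, List.dropLast_cons_cons, List.mem_cons,
    forall_eq_or_imp]
  tauto

theorem wt_nonneg {p : S → S → ℝ} (hp : ∀ i j, 0 ≤ p i j) (l : List S) (i : S) :
    0 ≤ wt p i l := by
  induction l generalizing i with
  | nil => exact zero_le_one
  | cons k l ih => exact mul_nonneg (hp i k) (ih k)

variable [Fintype S] [DecidableEq S]

def hitPaths (R : Finset S) (j : S) : ℕ → Finset (List S)
  | 0 => ∅
  | n + 1 => insert [j] ((Rᶜ ×ˢ hitPaths R j n).image fun a => a.1 :: a.2)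

theorem mem_hitPaths {n : ℕ} {l : List S} :
    l ∈ hitPaths R j n ↔ IsHitPath R j l ∧ l.length ≤ n := by
  induction n generalizing l with
  | zero =>
    simp only [hitPaths, notMem_empty, false_iff, not_and, Nat.le_zero, List.length_eq_zero_iff]
    rintro h rfl
    exact not_isHitPath_nil h
  | succ n ih =>
    simp only [hitPaths, mem_insert, mem_image, mem_product, mem_compl, Prod.exists, ih]
    rcases l with _ | ⟨k, _ | ⟨m, l⟩⟩ <;>
      simp [not_isHitPath_nil, isHitPath_singleton, isHitPath_cons_cons, and_assoc]

theorem hitPaths_mono : Monotone (hitPaths R j) := fun _ _ hmn _ hl =>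
  mem_hitPaths.2 ⟨(mem_hitPaths.1 hl).1, (mem_hitPaths.1 hl).2.trans hmn⟩

variable (p : S → S → ℝ)

theorem sum_hitPaths_succ (n : ℕ) (i : S) :
    ∑ l ∈ hitPaths R j (n + 1), wt p i l =
      p i j + ∑ k ∈ Rᶜ, p i k * ∑ l ∈ hitPaths R j n, wt p k l := by
  have hnotMem : [j] ∉ (Rᶜ ×ˢ hitPaths R j n).image fun a => a.1 :: a.2 := by
    simp only [mem_image, mem_product, not_exists, not_and, Prod.forall, List.cons.injEq]
    rintro k l ⟨-, hl⟩ - rfl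
    exact not_isHitPath_nil (mem_hitPaths.1 hl).1
  have hinj : Set.InjOn (fun a : S × List S => a.1 :: a.2) (Rᶜ ×ˢ hitPaths R j n : Finset _) :=
    fun a _ b _ h => Prod.ext (List.cons.inj h).1 (List.cons.inj h).2
  rw [hitPaths, sum_insert hnotMem, sum_image hinj, sum_product]
  simp only [wt, mul_one, mul_sum]

theorem sum_hitPaths_le_one (hs : IsStochastic p) (hj : j ∈ R) (n : ℕ) (i : S) :
    ∑ l ∈ hitPaths R j n, wt p i l ≤ 1 := by
  induction n generalizing i with
  | zero => simp [hitPaths]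
  | succ n ih =>
    calc ∑ l ∈ hitPaths R j (n + 1), wt p i l
        = p i j + ∑ k ∈ Rᶜ, p i k * ∑ l ∈ hitPaths R j n, wt p k l :=
          sum_hitPaths_succ p n i
      _ ≤ ∑ k ∈ R, p i k + ∑ k ∈ Rᶜ, p i k :=
        add_le_add (single_le_sum (fun k _ => hs.1 i k) hj)
          (sum_le_sum fun k _ => mul_le_of_le_one_right (hs.1 i k) (ih k))
      _ = 1 := by rw [sum_add_sum_compl, hs.2 i]

theorem summable_wt_hitPath (hs : IsStochastic p) (hj : j ∈ R) (i : S) :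
    Summable fun l : {l // IsHitPath R j l} => wt p i l.1 := by
  classical
  refine summable_of_sum_le (c := 1) (fun l => wt_nonneg hs.1 l.1 i) fun u => ?_
  set N := u.sup fun l => l.1.length
  calc ∑ l ∈ u, wt p i l.1
      ≤ ∑ l ∈ (hitPaths R j N).subtype (IsHitPath R j), wt p i l.1 :=
        sum_le_sum_of_subset_of_nonneg
          (fun l hl => mem_subtype.2
            (mem_hitPaths.2 ⟨l.2, le_sup (f := fun l => l.1.length) hl⟩))
          fun l _ _ => wt_nonneg hs.1 l.1 i
    _ = ∑ l ∈ hitPaths R j N, wt p i l := sum_subtype_of_mem _ fun l hl => (mem_hitPaths.1 hl).1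
    _ ≤ 1 := sum_hitPaths_le_one p hs hj N i

theorem tendsto_sum_hitPaths (hs : IsStochastic p) (hj : j ∈ R) (hi : i ∉ R) :
    Tendsto (fun n => ∑ l ∈ hitPaths R j n, wt p i l) atTop (𝓝 (hitProb p R i j)) := by
  classical
  have hmono : Monotone fun n => (hitPaths R j n).subtype (IsHitPath R j) :=
    fun _ _ hmn _ hl => mem_subtype.2 (hitPaths_mono hmn (mem_subtype.1 hl))
  have hcover :
      ∀ l : {l // IsHitPath R j l}, ∃ n, l ∈ (hitPaths R j n).subtype (IsHitPath R j) :=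
    fun l => ⟨l.1.length, mem_subtype.2 (mem_hitPaths.2 ⟨l.2, le_rfl⟩)⟩
  rw [hitProb, if_neg hi]
  refine Tendsto.congr (fun n => ?_) ((summable_wt_hitPath p hs hj i).hasSum.comp
    (tendsto_atTop_finset_of_monotone hmono hcover))
  exact sum_subtype_of_mem _ fun l hl => (mem_hitPaths.1 hl).1

theorem hitProb_of_mem (hi : i ∈ R) : hitProb p R i j = if i = j then 1 else 0 := if_pos hi

theorem isHarmonicOff_hitProb (hs : IsStochastic p) (hj : j ∈ R) :
    IsHarmonicOff p R fun x => hitProb p R x j := fun x hx => by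
  have hstep :
      Tendsto (fun n => p x j + ∑ k ∈ Rᶜ, p x k * ∑ l ∈ hitPaths R j n, wt p k l) atTop
        (𝓝 (p x j + ∑ k ∈ Rᶜ, p x k * hitProb p R k j)) :=
    tendsto_const_nhds.add (tendsto_finsetSum _ fun k hk =>
      (tendsto_sum_hitPaths p hs hj (mem_compl.1 hk)).const_mul _)
  have hroot : ∑ k ∈ R, p x k * hitProb p R k j = p x j := by
    rw [sum_congr rfl fun k hk => by rw [hitProb_of_mem p hk, mul_ite, mul_one, mul_zero],
      sum_ite_eq', if_pos hj]
  dsimp only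
  rw [tendsto_nhds_unique ((tendsto_sum_hitPaths p hs hj hx).comp (tendsto_add_atTop_nat 1))
    (hstep.congr fun n => (sum_hitPaths_succ p n x).symm), ← hroot, sum_add_sum_compl]

end Paths

/-- Harmonic tree formula: `P_i(X_{T_R} = j) = w_{ij}(R)/w(R)`. -/
theorem harmonic_tree_formula {S : Type*} [Fintype S] [DecidableEq S]
    (p : S → S → ℝ) (hs : IsStochastic p) (R : Finset S) (hw : 0 < w p R)
    (i : S) (j : S) (hj : j ∈ R) :
    hitProb p R i j = wroot p R i j / w p R := by
  obtain ⟨f, hf, hpos⟩ := exists_isForest_pos_of_w_pos hs.1 hw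
  have hboundary : ∀ x ∈ R, hitProb p R x j = wroot p R x j / w p R := fun x hx => by
    rw [hitProb_of_mem p hx, wroot_of_mem p hx]
    split_ifs
    · exact (div_self hw.ne').symm
    · exact (zero_div _).symm
  exact congrFun ((isHarmonicOff_hitProb p hs hj).eq_of_eqOn
    ((isHarmonicOff_wroot p hs hj).div_const _) hs hf hpos hboundary) i
end
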